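/- arXiv:1202.2887 — 6 statements merged into one kernel-verified Lean document; each statement's English description precedes it below -/
import Mathlib

section
/- A code C ⊆ [q]^n is [q;Q;η;u]-SQ-disjunct if and only if no codeword of C is included in the syndrome of any set of u other codewords of C. -/
open Finset

/-- The syndrome of a finite set of vectors: coordinatewise floor of (sum / η). -/
def synd (η n : ℕ) (S : Finset (Fin n → ℕ)) : Fin n → ℕ :=
  fun i => (∑ x ∈ S, x i) / η

/-- X ◁ Z : syndrome of X is coordinatewise ≤ syndrome of Z. -/
def Included (η n : ℕ) (X Z : Finset (Fin n → ℕ)) : Prop :=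
  ∀ i, synd η n X i ≤ synd η n Z i

/-- C is [q;Q;η;u]-SQ-disjunct. -/
def SQDisjunct (η u n : ℕ) (C : Finset (Fin n → ℕ)) : Prop :=
  ∀ X Z : Finset (Fin n → ℕ), X ⊆ C → Z ⊆ C → X.card ≤ u → Z.card ≤ u →
    Included η n X Z → X ⊆ Z

/-- A code is SQ-disjunct iff no codeword is included in a set of u other codewords. -/
theorem stmt0 (q Q η u n : ℕ) (hq : 2 ≤ q) (hQ : 2 ≤ Q) (hη : 1 ≤ η) (hu : 1 ≤ u)
    (hn : 1 ≤ n) (C : Finset (Fin n → ℕ)) (hC : ∀ x ∈ C, ∀ i, x i < q) :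
    SQDisjunct η u n C ↔
      ∀ x ∈ C, ∀ Z ⊆ C, x ∉ Z → Z.card ≤ u → ¬ Included η n {x} Z := by
  constructor
  · intro h x hx Z hZ hxZ hZc hincl
    exact hxZ (h {x} Z (by simpa using hx) hZ (by simpa using hu) hZc hincl
      (Finset.mem_singleton_self x))
  · intro h X Z hXC hZC hXc hZc hincl x hxX
    by_contra hxZ
    refine h x (hXC hxX) Z hZC hxZ hZc ?_
    intro i
    refine le_trans ?_ (hincl i)
    simp only [synd, Finset.sum_singleton]
    exact Nat.div_le_div_right (Finset.single_le_sum (f := fun y => y i) (fun y _ => Nat.zero_le _) hxX)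
end

section
/- A code C is [q;Q;η;u]-SQ-disjunct if and only if for every set of u+1 distinct codewords {x_1,...,x_{u+1}} of C and each i ∈ {1,...,u+1}, there exists a coordinate k(i) such that ⌊x_{k(i),i}/η⌋ > ⌊(∑_{j≠i} x_{k(i),j})/η⌋, with k injective (k(i) ≠ k(j) for i ≠ j). -/
open Finset

/-- An SQ-disjunct code gives, for any u+1 distinct codewords, a distinct
witnessing coordinate for each codeword where it dominates the other u. -/
theorem stmt2 (q Q η u n : ℕ) (hq : 2 ≤ q) (hQ : 2 ≤ Q) (hη : 1 ≤ η) (hu : 1 ≤ u)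
    (C : Finset (Fin n → ℕ)) (hC : ∀ x ∈ C, ∀ i, x i < q)
    (hdisj : SQDisjunct η u n C)
    (x : Fin (u + 1) → (Fin n → ℕ)) (hx : ∀ j, x j ∈ C) (hinj : Function.Injective x) :
    ∃ k : Fin (u + 1) → Fin n, Function.Injective k ∧
      ∀ i, (∑ j ∈ Finset.univ.erase i, x j (k i)) / η < x i (k i) / η := by
  have key : ∀ i : Fin (u+1), ∃ k : Fin n,
      (∑ j ∈ Finset.univ.erase i, x j k) / η < x i k / η := by
    intro i
    set Z : Finset (Fin n → ℕ) := (Finset.univ.erase i).image x with hZ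
    have hsum : ∀ k : Fin n, (∑ z ∈ Z, z k) = ∑ j ∈ Finset.univ.erase i, x j k := by
      intro k
      rw [hZ, Finset.sum_image (fun a _ b _ h => hinj h)]
    have hXZ : ¬ ({x i} : Finset (Fin n → ℕ)) ⊆ Z := by
      intro h
      have := h (Finset.mem_singleton_self (x i))
      rw [hZ, Finset.mem_image] at this
      obtain ⟨j, hj, hji⟩ := this
      exact (Finset.ne_of_mem_erase hj) (hinj hji)
    have hZC : Z ⊆ C := by
      intro z hz
      rw [hZ, Finset.mem_image] at hz
      obtain ⟨j, _, hj⟩ := hz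
      exact hj ▸ hx j
    have hZcard : Z.card ≤ u := by
      rw [hZ, Finset.card_image_of_injective _ hinj,
        Finset.card_erase_of_mem (Finset.mem_univ i), Finset.card_univ]
      simp
    have hnotinc : ¬ Included η n {x i} Z := fun h =>
      hXZ (hdisj {x i} Z (by simp [hx]) hZC (by simp; omega) hZcard h)
    rw [Included] at hnotinc
    push_neg at hnotinc
    obtain ⟨k, hk⟩ := hnotinc
    refine ⟨k, ?_⟩
    rw [synd, synd, Finset.sum_singleton, hsum] at hk
    omega
  choose k hk using key
  refine ⟨k, ?_, hk⟩
  intro i j hij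
  by_contra hne
  have hji : j ∈ Finset.univ.erase i := Finset.mem_erase.mpr ⟨fun h => hne h.symm, Finset.mem_univ j⟩
  have hij' : i ∈ Finset.univ.erase j := Finset.mem_erase.mpr ⟨hne, Finset.mem_univ i⟩
  have h1 : x j (k j) ≤ ∑ l ∈ Finset.univ.erase i, x l (k j) :=
    Finset.single_le_sum (f := fun l => x l (k j)) (fun _ _ => Nat.zero_le _) hji
  have h2 : x i (k j) ≤ ∑ l ∈ Finset.univ.erase j, x l (k j) :=
    Finset.single_le_sum (f := fun l => x l (k j)) (fun _ _ => Nat.zero_le _) hij'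
  have hki := hk i
  have hkj := hk j
  rw [hij] at hki
  have d1 : x j (k j) / η < x i (k j) / η :=
    lt_of_le_of_lt (Nat.div_le_div_right h1) hki
  have d2 : x i (k j) / η < x j (k j) / η :=
    lt_of_le_of_lt (Nat.div_le_div_right h2) hkj
  omega
end

section
/- If there exists a nonempty [q;Q;η;u]-SQ-disjunct code with u ≥ 1, then q - 1 ≥ η. In particular, there exists no binary [2;Q;η;u]-SQ-disjunct code when η > 1. -/
open Finset

/-- Existence of a (nontrivial) [q;Q;η;u]-SQ-disjunct code forces q - 1 ≥ η.
In particular there is no binary SQ-disjunct code when η > 1. -/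
theorem stmt3 (q Q η u n : ℕ) (hq : 2 ≤ q) (hQ : 2 ≤ Q) (hη : 1 ≤ η) (hu : 1 ≤ u)
    (hn : 1 ≤ n) (C : Finset (Fin n → ℕ)) (hC : ∀ x ∈ C, ∀ i, x i < q)
    (hcard : u + 1 ≤ C.card) (hdisj : SQDisjunct η u n C) :
    η ≤ q - 1 := by
  by_contra h
  push_neg at h
  have hqη : q ≤ η := by omega
  have h2 : 1 < C.card := by omega
  obtain ⟨x, hx, y, hy, hxy⟩ := Finset.one_lt_card.mp h2
  have hinc : Included η n {x} {y} := by
    intro i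
    have hx0 : synd η n {x} i = 0 := by
      simp [synd, Nat.div_eq_of_lt (lt_of_lt_of_le (hC x hx i) hqη)]
    simp [hx0]
  have := hdisj {x} {y} (by simpa using hx) (by simpa using hy)
    (by simpa using hu) (by simpa using hu) hinc
  exact hxy (by simpa using this (Finset.mem_singleton_self x))
end

section
/- Let C_b ⊆ {0,1}^n be a binary u-disjunct code and let q - 1 ≥ η ≥ 1. Then the code (q-1)·C_b = {(q-1)x : x ∈ C_b} ⊆ [q]^n is [q;Q;η;u]-SQ-disjunct. -/
open Finset

/-- A binary u-disjunct code: for any codeword x and set Z of at most u other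
codewords, some coordinate has x_k = 1 and z_k = 0 for all z ∈ Z. -/
def BinDisjunct (u n : ℕ) (C : Finset (Fin n → ℕ)) : Prop :=
  ∀ x ∈ C, ∀ Z ⊆ C, x ∉ Z → Z.card ≤ u →
    ∃ k, x k = 1 ∧ ∀ z ∈ Z, z k = 0

/-- Multiplying a binary u-disjunct code by q-1 ≥ η yields a [q;Q;η;u]-SQ-disjunct code. -/
theorem stmt4 (q Q η u n : ℕ) (hq : 2 ≤ q) (hQ : 2 ≤ Q) (hη : 1 ≤ η) (hηq : η ≤ q - 1)
    (hu : 1 ≤ u) (Cb : Finset (Fin n → ℕ)) (hbin : ∀ x ∈ Cb, ∀ i, x i ≤ 1)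
    (hdisj : BinDisjunct u n Cb) :
    SQDisjunct η u n (Cb.image (fun x i => (q - 1) * x i)) := by
  have hq1 : 1 ≤ q - 1 := le_trans hη hηq
  intro X Z hXC hZC hXu hZu hinc y hyX
  by_contra hyZ
  obtain ⟨x, hx, hxy⟩ := Finset.mem_image.mp (hXC hyX)
  set f : (Fin n → ℕ) → (Fin n → ℕ) := fun x i => (q - 1) * x i with hf
  have finj : ∀ a b : Fin n → ℕ, f a = f b → a = b := by
    intro a b hab
    funext i
    have := congrFun hab i
    exact Nat.eq_of_mul_eq_mul_left hq1 this
  set Z' : Finset (Fin n → ℕ) := Cb.filter (fun z => f z ∈ Z) with hZ'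
  have hxZ' : x ∉ Z' := by
    intro hmem
    exact hyZ (hxy ▸ (Finset.mem_filter.mp hmem).2)
  have hcard : Z'.card ≤ Z.card := by
    apply Finset.card_le_card_of_injOn f
    · intro z hz; exact (Finset.mem_filter.mp hz).2
    · intro a _ b _ hab; exact finj a b hab
  obtain ⟨k, hxk, hzk⟩ := hdisj x hx Z' (Finset.filter_subset _ _) hxZ' (le_trans hcard hZu)
  have hZ0 : synd η n Z k = 0 := by
    have hsum : ∑ w ∈ Z, w k = 0 := by
      apply Finset.sum_eq_zero
      intro w hw
      obtain ⟨z, hz, hzw⟩ := Finset.mem_image.mp (hZC hw)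
      have hzZ' : z ∈ Z' := Finset.mem_filter.mpr ⟨hz, hzw ▸ hw⟩
      have := hzk z hzZ'
      rw [← hzw]
      simp [f, this]
    simp [synd, hsum]
  have hX1 : 1 ≤ synd η n X k := by
    have hyk : y k = q - 1 := by rw [← hxy]; simp [f, hxk]
    have hsum : q - 1 ≤ ∑ w ∈ X, w k := by
      rw [← hyk]
      exact Finset.single_le_sum (f := fun w => w k) (fun w _ => Nat.zero_le _) hyX
    have : η ≤ ∑ w ∈ X, w k := le_trans hηq hsum
    exact (Nat.one_le_div_iff (lt_of_lt_of_le Nat.zero_lt_one hη)).mpr this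
  have := hinc k
  omega
end

section
/- If no codeword of C is included in the union of any t other codewords for all t ≤ u, and X = {x_1,...,x_s}, Z = {z_1,...,z_t} are sets of codewords with s,t ≤ u and X ◁ Z, then X ⊆ Z. -/
open Finset

/-- Converse direction of Proposition 1: if no codeword of C is included in any
set of at most u other codewords, then X ◁ Z implies X ⊆ Z for codeword sets
of size at most u. -/
theorem stmt5 (q η u n : ℕ) (hη : 1 ≤ η) (hu : 1 ≤ u)
    (C : Finset (Fin n → ℕ)) (hC : ∀ x ∈ C, ∀ i, x i < q)
    (hyp : ∀ x ∈ C, ∀ Z ⊆ C, x ∉ Z → Z.card ≤ u → ¬ Included η n {x} Z)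
    (X Z : Finset (Fin n → ℕ)) (hX : X ⊆ C) (hZ : Z ⊆ C)
    (hXc : X.card ≤ u) (hZc : Z.card ≤ u) (hincl : Included η n X Z) :
    X ⊆ Z := by
  intro x hx
  by_contra hxZ
  refine hyp x (hX hx) Z hZ hxZ hZc fun i => ?_
  refine le_trans ?_ (hincl i)
  simp only [synd, Finset.sum_singleton]
  exact Nat.div_le_div_right (Finset.single_le_sum (f := fun y => y i) (fun y _ => Nat.zero_le _) hx)
end

section
/- Let q, η, u be positive integers and let I = ⌊(q-1)/η⌋. Then the number of pairs (x_1, (x_2,...,x_{u+1})) with x_1 ∈ {η,...,q-1}, x_j ∈ ℕ for j = 2,...,u+1, and ∑_{j=2}^{u+1} x_j ≤ ⌊x_1/η⌋·η − 1 equals η·∑_{i=1}^{I-1} C(iη+u-1,u) + (q−Iη)·C(Iη+u−1,u). -/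
open Finset


lemma hockey (u : ℕ) : ∀ m : ℕ, ∑ k ∈ range (m+1), (k + u).choose u = (m + u + 1).choose (u + 1) := by
  intro m
  induction m with
  | zero => simp
  | succ m ih =>
      rw [Finset.sum_range_succ, ih, show m+1+u+1 = (m+u+1)+1 by ring,
        Nat.choose_succ_succ (m+u+1) u, show m+1+u = m+u+1 by ring]
      exact Nat.add_comm _ _

lemma stepL (u q m : ℕ) :
    (Finset.univ.filter (fun v : Fin (u+1) → Fin q => ∑ j, (v j : ℕ) ≤ m)).card
      = ∑ a : Fin q, (Finset.univ.filter
          (fun w : Fin u → Fin q => (a : ℕ) + ∑ j, (w j : ℕ) ≤ m)).card := by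
  rw [Finset.card_filter]
  rw [← Equiv.sum_comp (Fin.consEquiv (fun _ : Fin (u+1) => Fin q))]
  rw [Fintype.sum_prod_type]
  refine Finset.sum_congr rfl (fun a _ => ?_)
  rw [Finset.card_filter]
  refine Finset.sum_congr rfl (fun w _ => ?_)
  have hc : (Fin.consEquiv (fun _ : Fin (u+1) => Fin q)) (a, w) = Fin.cons a w := rfl
  rw [hc]
  simp [Fin.sum_univ_succ]

lemma key : ∀ (u m q : ℕ), m < q →
    (Finset.univ.filter (fun v : Fin u → Fin q => ∑ j, (v j : ℕ) ≤ m)).card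
      = (m + u).choose u := by
  intro u
  induction u with
  | zero => intro m q h; simp
  | succ u ih =>
      intro m q h
      rw [stepL]
      have step2 : ∀ a : Fin q, (Finset.univ.filter
            (fun w : Fin u → Fin q => (a : ℕ) + ∑ j, (w j : ℕ) ≤ m)).card
          = if (a : ℕ) ≤ m then (m - (a : ℕ) + u).choose u else 0 := by
        intro a
        by_cases ha : (a : ℕ) ≤ m
        · rw [if_pos ha, ← ih (m - a) q (by omega)]
          congr 1
          ext w
          simp only [Finset.mem_filter, Finset.mem_univ, true_and]
          omega
        · rw [if_neg ha, Finset.card_eq_zero, Finset.filter_eq_empty_iff]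
          intro w _
          omega
      simp_rw [step2]
      rw [Fin.sum_univ_eq_sum_range (fun a => if a ≤ m then (m - a + u).choose u else 0) q]
      rw [Finset.range_eq_Ico, ← Finset.sum_Ico_consecutive _ (Nat.zero_le (m+1)) h]
      have hz : ∑ a ∈ Ico (m+1) q, (if a ≤ m then (m - a + u).choose u else 0) = 0 := by
        apply Finset.sum_eq_zero
        intro a ha
        simp only [Finset.mem_Ico] at ha
        rw [if_neg (by omega)]
      rw [hz, add_zero, ← Finset.range_eq_Ico]
      have h1 : ∑ a ∈ range (m+1), (if a ≤ m then (m - a + u).choose u else 0)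
          = ∑ a ∈ range (m+1), (m - a + u).choose u := by
        apply Finset.sum_congr rfl
        intro a ha
        simp only [Finset.mem_range] at ha
        rw [if_pos (by omega)]
      have h3 : ∑ a ∈ range (m+1), (m - a + u).choose u
          = ∑ k ∈ range (m+1), (k + u).choose u := by
        rw [← Finset.sum_range_reflect (fun k => (k + u).choose u) (m+1)]
        refine Finset.sum_congr rfl (fun a _ => ?_)
        rw [show m + 1 - 1 - a = m - a by omega]
      rw [h1, h3, hockey u m]
      rw [show m + (u+1) = m + u + 1 by ring]

lemma outer (η : ℕ) (hη : 1 ≤ η) (f : ℕ → ℕ) : ∀ I, 1 ≤ I → ∀ q, I * η < q → q ≤ (I+1) * η →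
    ∑ a ∈ Ico η q, f (a / η) = η * ∑ i ∈ Icc 1 (I-1), f i + (q - I * η) * f I := by
  intro I hI
  induction I, hI using Nat.le_induction with
  | base =>
      intro q h1 h2
      have hc : ∀ a ∈ Ico η q, f (a / η) = f 1 := by
        intro a ha
        simp only [mem_Ico] at ha
        have : a / η = 1 := Nat.div_eq_of_lt_le (by omega) (by omega)
        rw [this]
      rw [Finset.sum_congr rfl hc, Finset.sum_const, Nat.card_Ico, smul_eq_mul]
      simp only [show (1:ℕ) - 1 = 0 from rfl, Finset.Icc_eq_empty_of_lt (by omega : (0:ℕ) < 1)]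
      simp [one_mul]
  | succ I hI ih =>
      intro q h1 h2
      have hsplit : η ≤ (I+1) * η := by nlinarith
      rw [← Finset.sum_Ico_consecutive _ hsplit (le_of_lt h1)]
      rw [ih ((I+1)*η) (by nlinarith) (le_refl _)]
      have hc : ∀ a ∈ Ico ((I+1)*η) q, f (a / η) = f (I+1) := by
        intro a ha
        simp only [mem_Ico] at ha
        have hx : a < (I+1+1) * η := lt_of_lt_of_le ha.2 h2
        have : a / η = I + 1 := Nat.div_eq_of_lt_le ha.1 hx
        rw [this]
      rw [Finset.sum_congr rfl hc, Finset.sum_const, Nat.card_Ico, smul_eq_mul]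
      have hIcc : Icc 1 (I+1-1) = insert I (Icc 1 (I-1)) := by
        rw [show I + 1 - 1 = I by omega, show I = (I - 1) + 1 by omega,
          ← Finset.insert_Icc_right_eq_Icc_add_one (by omega), show I - 1 + 1 = I by omega]
      rw [hIcc, Finset.sum_insert (by simp; omega)]
      have hd : (I+1)*η - I*η = η := by rw [Nat.add_mul, one_mul]; omega
      rw [hd, Nat.mul_add]
      ring

lemma innerL (q η u : ℕ) (hη : 1 ≤ η) (a : ℕ) (ha : η ≤ a) (haq : a < q) :
    (Finset.univ.filter (fun v : Fin u → Fin q => ∑ j, (v j : ℕ) < (a/η)*η)).card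
      = ((a/η)*η + u - 1).choose u := by
  have h1 : 1 ≤ a / η := (Nat.one_le_div_iff (by omega)).2 ha
  have hN1 : 1 ≤ a/η*η := by nlinarith
  have hNa : a/η*η ≤ a := Nat.div_mul_le_self a η
  have he : (Finset.univ.filter (fun v : Fin u → Fin q => ∑ j, (v j : ℕ) < (a/η)*η))
      = (Finset.univ.filter (fun v : Fin u → Fin q => ∑ j, (v j : ℕ) ≤ a/η*η - 1)) := by
    ext v
    simp only [Finset.mem_filter, Finset.mem_univ, true_and]
    omega
  rw [he, key u (a/η*η - 1) q (by omega)]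
  congr 1
  omega

/-- Counting the "acceptable rows": the number of pairs (x₁, v) with
x₁ ∈ {η,...,q-1} and v ∈ ℕ^u with sum(v) ≤ ⌊x₁/η⌋·η - 1 equals
η·∑_{i=1}^{I-1} C(iη+u-1, u) + (q - Iη)·C(Iη+u-1, u), where I = ⌊(q-1)/η⌋.
(All relevant entries are < q, so the count is over Fin q.) -/
theorem stmt8 (q η u : ℕ) (hq : 2 ≤ q) (hη : 1 ≤ η) (hηq : η ≤ q - 1) (hu : 1 ≤ u) :
    (Finset.univ.filter
        (fun p : Fin q × (Fin u → Fin q) =>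
          η ≤ (p.1 : ℕ) ∧ ∑ j, (p.2 j : ℕ) < ((p.1 : ℕ) / η) * η)).card
      = η * ∑ i ∈ Finset.Icc 1 ((q - 1) / η - 1), (i * η + u - 1).choose u
        + (q - ((q - 1) / η) * η) * (((q - 1) / η) * η + u - 1).choose u := by
  have hI1 : 1 ≤ (q - 1) / η := (Nat.one_le_div_iff (by omega)).2 hηq
  have hIq : ((q - 1) / η) * η ≤ q - 1 := Nat.div_mul_le_self _ _
  have hIq2 : q ≤ ((q - 1) / η + 1) * η := by
    have h : q - 1 < ((q - 1) / η + 1) * η := (Nat.div_lt_iff_lt_mul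
      (show 0 < η by omega)).1 (Nat.lt_succ_self ((q - 1) / η))
    omega
  rw [Finset.card_filter, Fintype.sum_prod_type]
  have inner2 : ∀ a : Fin q,
      (∑ v : Fin u → Fin q,
        if η ≤ (a : ℕ) ∧ ∑ j, (v j : ℕ) < ((a : ℕ) / η) * η then 1 else 0)
      = if η ≤ (a : ℕ) then (((a : ℕ) / η) * η + u - 1).choose u else 0 := by
    intro a
    rw [← Finset.card_filter]
    by_cases ha : η ≤ (a : ℕ)
    · rw [if_pos ha, ← innerL q η u hη a ha a.isLt]
      congr 1
      ext v
      simp only [Finset.mem_filter, Finset.mem_univ, true_and, ha, true_and]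
    · rw [if_neg ha, Finset.card_eq_zero, Finset.filter_eq_empty_iff]
      intro v _
      exact fun hc => ha hc.1
  rw [Finset.sum_congr rfl (fun a _ => inner2 a)]
  rw [Fin.sum_univ_eq_sum_range
    (fun a => if η ≤ a then ((a / η) * η + u - 1).choose u else 0) q]
  have hsplit : ∑ a ∈ range q, (if η ≤ a then ((a / η) * η + u - 1).choose u else 0)
      = ∑ a ∈ Ico η q, (fun i => (i * η + u - 1).choose u) (a / η) := by
    rw [Finset.range_eq_Ico, ← Finset.sum_Ico_consecutive _ (Nat.zero_le η) (by omega : η ≤ q)]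
    have hz : ∑ a ∈ Ico 0 η, (if η ≤ a then ((a / η) * η + u - 1).choose u else 0) = 0 := by
      apply Finset.sum_eq_zero
      intro a ha
      simp only [Finset.mem_Ico] at ha
      rw [if_neg (by omega)]
    rw [hz, zero_add]
    apply Finset.sum_congr rfl
    intro a ha
    simp only [Finset.mem_Ico] at ha
    rw [if_pos ha.1]
  rw [hsplit]
  exact outer η hη (fun i => (i * η + u - 1).choose u) ((q - 1) / η) hI1 q (by omega) hIq2
end
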